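/- Let G be a graph with minimum degree at least 3, B a maximal 2-connected block of G, and v any vertex of B. Then every edge of B is revealed by v. -/

import Mathlib

open SimpleGraph

variable {V : Type*}

/-- A walk is non-backtracking if no vertex equals the vertex two steps later. -/
def NonBacktracking {G : SimpleGraph V} {u v : V} (p : G.Walk u v) : Prop :=
  ∀ i : ℕ, i + 2 < p.support.length → p.support[i]? ≠ p.support[i + 2]?

/-- The weight of a walk: the sum of the weights of its edges, with multiplicity. -/
def walkWeight {G : SimpleGraph V} (F : Sym2 V → ℝ) {u v : V} (p : G.Walk u v) : ℝ :=
  (p.edges.map F).sum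

/-- An edge `e` is revealed by a set `S` of vertices if an integer combination of weights of
closed non-backtracking walks from vertices of `S` equals a nonzero multiple of the weight
of `e`, for every weight function. -/
def RevealedBySet (G : SimpleGraph V) (S : Set V) (e : Sym2 V) : Prop :=
  ∃ (l : ℕ) (w : Fin l → V) (W : ∀ i, G.Walk (w i) (w i)) (c : Fin l → ℤ) (ce : ℤ),
    (∀ i, w i ∈ S) ∧ (∀ i, NonBacktracking (W i)) ∧ (∀ i, c i ≠ 0) ∧ ce ≠ 0 ∧
    ∀ F : Sym2 V → ℝ, ∑ i, (c i : ℝ) * walkWeight F (W i) = (ce : ℝ) * F e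

/-- A walk `W` is revealed by the vertex `v`. -/
def WalkRevealedBy (G : SimpleGraph V) (v : V) {a b : V} (W : G.Walk a b) : Prop :=
  ∃ (l : ℕ) (Ws : Fin l → G.Walk v v) (c : Fin l → ℤ) (cW : ℤ),
    (∀ i, NonBacktracking (Ws i)) ∧ (∀ i, c i ≠ 0) ∧ cW ≠ 0 ∧
    ∀ F : Sym2 V → ℝ, ∑ i, (c i : ℝ) * walkWeight F (Ws i) = (cW : ℝ) * walkWeight F W

/-- `G` is odometric: every edge is revealed by every single vertex. -/
def Odometric (G : SimpleGraph V) : Prop :=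
  ∀ v : V, ∀ e ∈ G.edgeSet, RevealedBySet G {v} e

/-- `u` is a cut vertex of `G`. -/
def IsCutVertex (G : SimpleGraph V) (u : V) : Prop :=
  G.Connected ∧ ¬ (G.induce {x : V | x ≠ u}).Connected

/-- The induced subgraph on `B` is 2-connected. -/
def TwoConnectedOn (G : SimpleGraph V) (B : Set V) : Prop :=
  3 ≤ B.ncard ∧ (G.induce B).Connected ∧ ∀ u ∈ B, (G.induce (B \ {u})).Connected

/-- `B` is a maximal 2-connected block of `G`. -/
def IsBlock (G : SimpleGraph V) (B : Set V) : Prop :=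
  TwoConnectedOn G B ∧ ∀ B', B ⊆ B' → TwoConnectedOn G B' → B' = B

/-!
Let `xy` be an edge and `P` a path from `v` to `x` avoiding `y`. Minimum degree `3` lets one extend
any dart out of `x` to an infinite non-backtracking sequence; it must repeat a dart, and this yields
closed non-backtracking walks `M₁`, `M₂` at `x` whose first and last steps avoid the vertex preceding
`x` on `P`, and such that `M₁` followed by `M₂` is still non-backtracking. Each lollipop `P M P⁻¹` is
then a non-backtracking closed walk at `v` of weight `2P + M`, and
`(2P + M₁) - (2P + M₁ + M₂) + (2P + M₂) = 2P`. The same for the path `P` extended by `xy`, minus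
this, is `2 F(xy)`.
-/

section

variable {G : SimpleGraph V} {u v w x y : V}

theorem nonBacktracking_iff_getVert (p : G.Walk u v) :
    NonBacktracking p ↔ ∀ i, i + 2 ≤ p.length → p.getVert i ≠ p.getVert (i + 2) := by
  simp only [NonBacktracking, Walk.length_support]
  refine forall_congr' fun i => ?_
  rw [show i + 2 < p.length + 1 ↔ i + 2 ≤ p.length by omega]
  refine imp_congr_right fun hi => ?_
  rw [← p.getVert_eq_support_getElem? (by omega), ← p.getVert_eq_support_getElem? hi,
    Ne, Option.some.injEq]

namespace NonBacktracking

theorem append {p : G.Walk u v} {q : G.Walk v w} (hp : NonBacktracking p)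
    (hq : NonBacktracking q) (h : p.penultimate ≠ q.snd) : NonBacktracking (p.append q) := by
  rw [nonBacktracking_iff_getVert] at *
  intro i hi
  rw [Walk.length_append] at hi
  rw [Walk.getVert_append', Walk.getVert_append']
  split_ifs with h1 h2 h2
  · exact hp i h2
  · obtain rfl | ⟨rfl, hpos⟩ : i = p.length ∨ i = p.length - 1 ∧ 0 < p.length := by omega
    · have := hq 0 (by omega)
      simp only [Walk.getVert_zero, zero_add] at this
      rwa [Walk.getVert_length, Nat.add_sub_cancel_left]
    · rwa [show p.length - 1 + 2 - p.length = 1 by omega]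
  · omega
  · have := hq (i - p.length) (by omega)
    rwa [show i - p.length + 2 = i + 2 - p.length by omega] at this

theorem copy {p : G.Walk u v} (hp : NonBacktracking p) {u' v' : V} (hu : u = u') (hv : v = v') :
    NonBacktracking (p.copy hu hv) := by
  subst hu hv
  exact hp

theorem reverse {p : G.Walk u v} (hp : NonBacktracking p) : NonBacktracking p.reverse := by
  rw [nonBacktracking_iff_getVert] at *
  intro i hi
  rw [Walk.length_reverse] at hi
  rw [Walk.getVert_reverse, Walk.getVert_reverse]
  have := hp (p.length - (i + 2)) (by omega)
  rw [show p.length - (i + 2) + 2 = p.length - i by omega] at this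
  exact this.symm

end NonBacktracking

theorem SimpleGraph.Walk.IsPath.nonBacktracking {p : G.Walk u v} (hp : p.IsPath) :
    NonBacktracking p := by
  rw [nonBacktracking_iff_getVert]
  intro i hi h
  have := hp.getVert_injOn (show i ≤ p.length by omega) (show i + 2 ≤ p.length from hi) h
  omega

section walkWeight

variable (F : Sym2 V → ℝ)

theorem walkWeight_append (p : G.Walk u v) (q : G.Walk v w) :
    walkWeight F (p.append q) = walkWeight F p + walkWeight F q := by
  simp [walkWeight, Walk.edges_append]

theorem walkWeight_reverse (p : G.Walk u v) : walkWeight F p.reverse = walkWeight F p := by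
  simp [walkWeight, Walk.edges_reverse, List.sum_reverse]

theorem walkWeight_concat (p : G.Walk u v) (h : G.Adj v w) :
    walkWeight F (p.concat h) = walkWeight F p + F s(v, w) := by
  simp [walkWeight, Walk.edges_concat]

end walkWeight

namespace SimpleGraph.Walk

def lollipop (P : G.Walk v x) (M : G.Walk x x) : G.Walk v v := P.append (M.append P.reverse)

theorem snd_append_of_not_nil (p : G.Walk u v) (q : G.Walk v w) (hp : ¬ p.Nil) :
    (p.append q).snd = p.snd := by
  rw [snd, getVert_append', if_pos (Nat.one_le_iff_ne_zero.mpr (not_nil_iff_lt_length.mp hp).ne')]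

theorem penultimate_append_of_not_nil (p : G.Walk u v) (q : G.Walk v w) (hq : ¬ q.Nil) :
    (p.append q).penultimate = q.penultimate := by
  have := not_nil_iff_lt_length.mp hq
  rw [penultimate, penultimate, getVert_append, length_append, if_neg (by omega),
    show p.length + q.length - 1 - p.length = q.length - 1 by omega]

end SimpleGraph.Walk

theorem walkWeight_lollipop (F : Sym2 V → ℝ) (P : G.Walk v x) (M : G.Walk x x) :
    walkWeight F (P.lollipop M) = 2 * walkWeight F P + walkWeight F M := by
  rw [Walk.lollipop, walkWeight_append, walkWeight_append, walkWeight_reverse]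
  ring

theorem NonBacktracking.lollipop {P : G.Walk v x} {M : G.Walk x x} (hP : NonBacktracking P)
    (hM : NonBacktracking M) (hM_nil : ¬ M.Nil) (hsnd : M.snd ≠ P.penultimate)
    (hpen : M.penultimate ≠ P.penultimate) : NonBacktracking (P.lollipop M) := by
  refine hP.append (hM.append hP.reverse (by rwa [Walk.snd_reverse])) ?_
  rw [Walk.snd_append_of_not_nil _ _ hM_nil]
  exact hsnd.symm

def twoStepRec {α : Type*} (g : α → α → α) (a b : α) : ℕ → α
  | 0 => a
  | 1 => b
  | n + 2 => g (twoStepRec g a b n) (twoStepRec g a b (n + 1))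

namespace SimpleGraph.Walk

def ofSeq (f : ℕ → V) (hf : ∀ n, G.Adj (f n) (f (n + 1))) : (k : ℕ) → G.Walk (f 0) (f k)
  | 0 => nil
  | k + 1 => (ofSeq f hf k).concat (hf k)

section

variable {f : ℕ → V} (hf : ∀ n, G.Adj (f n) (f (n + 1)))

@[simp]
theorem length_ofSeq (k : ℕ) : (ofSeq f hf k).length = k := by
  induction k with
  | zero => rfl
  | succ k ih => rw [ofSeq, length_concat, ih]

theorem getVert_ofSeq {i k : ℕ} (hi : i ≤ k) : (ofSeq f hf k).getVert i = f i := by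
  induction k with
  | zero => rw [Nat.le_zero.mp hi]; rfl
  | succ k ih =>
    rw [ofSeq, concat_eq_append, getVert_append', length_ofSeq]
    split_ifs with hik
    · exact ih hik
    · rw [show i = k + 1 by omega, Nat.add_sub_cancel_left, getVert_cons_succ, getVert_zero]

theorem nonBacktracking_ofSeq (hnb : ∀ n, f n ≠ f (n + 2)) (k : ℕ) :
    NonBacktracking (ofSeq f hf k) := by
  rw [nonBacktracking_iff_getVert]
  intro i hi
  rw [length_ofSeq] at hi
  rw [getVert_ofSeq hf (by omega), getVert_ofSeq hf hi]
  exact hnb i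

end

/-- The first repeated dart `(f j, f (j + 1)) = (f i, f (i + 1))` closes a cycle: go along `f`
up to `j`, then back along `f` from `i`. Minimality of `j` makes the turn at `f i`
non-backtracking. -/
theorem exists_closed_nonBacktracking_of_seq [Finite V] {f : ℕ → V} (hf : ∀ n, G.Adj (f n) (f (n + 1)))
    (hnb : ∀ n, f n ≠ f (n + 2)) {s : V} (hs : f 1 ≠ s) (hs' : ∀ n, f (n + 1) = f 0 → f n ≠ s) :
    ∃ M : G.Walk (f 0) (f 0), NonBacktracking M ∧ ¬ M.Nil ∧ M.snd = f 1 ∧ M.penultimate ≠ s := by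
  classical
  have hrep : ∃ j, ∃ i < j, f i = f j ∧ f (i + 1) = f (j + 1) := by
    obtain ⟨n₁, n₂, hne, heq⟩ := Finite.exists_ne_map_eq_of_infinite fun n => (f n, f (n + 1))
    simp only [Prod.mk.injEq] at heq
    rcases hne.lt_or_gt with h | h
    · exact ⟨n₂, n₁, h, heq⟩
    · exact ⟨n₁, n₂, h, heq.1.symm, heq.2.symm⟩
  obtain ⟨i, hij, hfi, -⟩ := Nat.find_spec hrep
  set j := Nat.find hrep
  have hback : f (j - 1) ≠ f (i - 1) := by
    rcases Nat.eq_zero_or_pos i with rfl | hi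
    · have := (hf (j - 1)).ne
      rwa [Nat.sub_add_cancel (by omega), ← hfi] at this
    · intro h
      refine Nat.find_min hrep (m := j - 1) (by omega) ⟨i - 1, by omega, h.symm, ?_⟩
      rwa [Nat.sub_add_cancel hi, Nat.sub_add_cancel (by omega)]
  refine ⟨((ofSeq f hf j).copy rfl hfi.symm).append (ofSeq f hf i).reverse, ?_, ?_, ?_, ?_⟩
  · refine NonBacktracking.append ?_ (nonBacktracking_ofSeq hf hnb i).reverse ?_
    · exact (nonBacktracking_ofSeq hf hnb j).copy _ _
    · rwa [snd_reverse, penultimate, penultimate, getVert_copy, length_copy, length_ofSeq,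
        length_ofSeq, getVert_ofSeq hf (by omega), getVert_ofSeq hf (by omega)]
  · rw [not_nil_iff_lt_length, length_append, length_copy, length_ofSeq]
    omega
  · rw [snd, getVert_append', length_copy, length_ofSeq, if_pos (by omega), getVert_copy,
      getVert_ofSeq hf (by omega)]
  · rw [penultimate, getVert_append, length_append, length_copy, length_ofSeq, length_reverse,
      length_ofSeq]
    split_ifs with h
    · rw [getVert_copy, getVert_ofSeq hf (by omega)]
      refine hs' _ ?_
      obtain rfl : i = 0 := by omega
      rw [Nat.sub_add_cancel (by omega), add_zero, ← hfi]
    · rwa [getVert_reverse, length_ofSeq, getVert_ofSeq hf (by omega),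
        show i - (j + i - 1 - j) = 1 by omega]

end SimpleGraph.Walk

namespace SimpleGraph

theorem exists_adj_ne_ne {c : V} [Fintype (G.neighborSet c)] (h : 3 ≤ G.degree c) (s t : V) :
    ∃ z, G.Adj c z ∧ z ≠ s ∧ z ≠ t := by
  classical
  by_contra! hst
  have hsub : G.neighborFinset c ⊆ {s, t} := fun z hz => by
    rw [mem_neighborFinset] at hz
    have := hst z hz
    simp only [Finset.mem_insert, Finset.mem_singleton]
    tauto
  have := (Finset.card_le_card hsub).trans Finset.card_le_two
  rw [card_neighborFinset_eq_degree] at this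
  omega

variable [Fintype V] [DecidableRel G.Adj]

theorem exists_closed_nonBacktracking (hdeg : ∀ z, 3 ≤ G.degree z) (u s t : V) :
    ∃ M : G.Walk u u, NonBacktracking M ∧ ¬ M.Nil ∧ M.snd ≠ s ∧ M.snd ≠ t ∧ M.penultimate ≠ s := by
  classical
  obtain ⟨a, hua, has, hat⟩ := G.exists_adj_ne_ne (hdeg u) s t
  have hstep : ∀ p c, ∃ z, G.Adj c z ∧ z ≠ p ∧ (c = s → z ≠ u) := fun p c => by
    obtain ⟨z, hcz, hzp, hz⟩ := G.exists_adj_ne_ne (hdeg c) p (if c = s then u else p)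
    exact ⟨z, hcz, hzp, fun hc => by simpa [hc] using hz⟩
  choose g hg using hstep
  set f := twoStepRec g u a
  have hf : ∀ n, G.Adj (f n) (f (n + 1)) := fun n => by
    cases n with
    | zero => exact hua
    | succ n => exact (hg _ _).1
  have hnb : ∀ n, f n ≠ f (n + 2) := fun n => (hg _ _).2.1.symm
  have hs : ∀ n, f (n + 1) = f 0 → f n ≠ s := fun n => by
    cases n with
    | zero => exact fun h => absurd h hua.ne'
    | succ n => exact fun h hn => (hg _ _).2.2 hn h
  obtain ⟨M, hM, hM_nil, hM_snd, hM_pen⟩ := Walk.exists_closed_nonBacktracking_of_seq hf hnb has hs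
  exact ⟨M, hM, hM_nil, hM_snd ▸ has, hM_snd ▸ hat, hM_pen⟩

theorem exists_lollipops_two_mul_walkWeight (hdeg : ∀ z, 3 ≤ G.degree z) {P : G.Walk v x}
    (hP : NonBacktracking P) :
    ∃ W₁ W₂ W₃ : G.Walk v v, NonBacktracking W₁ ∧ NonBacktracking W₂ ∧ NonBacktracking W₃ ∧
      ∀ F : Sym2 V → ℝ,
        walkWeight F W₁ - walkWeight F W₂ + walkWeight F W₃ = 2 * walkWeight F P := by
  obtain ⟨M₁, hM₁, hM₁_nil, hM₁_snd, -, hM₁_pen⟩ :=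
    G.exists_closed_nonBacktracking hdeg x P.penultimate P.penultimate
  obtain ⟨M₂, hM₂, hM₂_nil, hM₂_snd, hM₂_snd', hM₂_pen⟩ :=
    G.exists_closed_nonBacktracking hdeg x P.penultimate M₁.penultimate
  have hM₁₂ : NonBacktracking (M₁.append M₂) := hM₁.append hM₂ hM₂_snd'.symm
  have hM₁₂_nil : ¬ (M₁.append M₂).Nil := by
    rw [Walk.not_nil_iff_lt_length, Walk.length_append]
    have := Walk.not_nil_iff_lt_length.mp hM₁_nil
    omega
  refine ⟨P.lollipop M₁, P.lollipop (M₁.append M₂), P.lollipop M₂,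
    hP.lollipop hM₁ hM₁_nil hM₁_snd hM₁_pen,
    hP.lollipop hM₁₂ hM₁₂_nil (by rwa [Walk.snd_append_of_not_nil _ _ hM₁_nil])
      (by rwa [Walk.penultimate_append_of_not_nil _ _ hM₂_nil]),
    hP.lollipop hM₂ hM₂_nil hM₂_snd hM₂_pen, fun F => ?_⟩
  simp only [walkWeight_lollipop, walkWeight_append]
  ring

theorem revealedBySet_singleton_of_isPath (hdeg : ∀ z, 3 ≤ G.degree z) {P : G.Walk v x}
    (hP : P.IsPath) (hxy : G.Adj x y) (hy : y ∉ P.support) : RevealedBySet G {v} s(x, y) := by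
  obtain ⟨W₁, W₂, W₃, hW₁, hW₂, hW₃, hW⟩ :=
    exists_lollipops_two_mul_walkWeight hdeg hP.nonBacktracking
  obtain ⟨W₁', W₂', W₃', hW₁', hW₂', hW₃', hW'⟩ :=
    exists_lollipops_two_mul_walkWeight hdeg (hP.concat hy hxy).nonBacktracking
  refine ⟨6, fun _ => v, ![W₁', W₂', W₃', W₁, W₂, W₃], ![1, -1, 1, -1, 1, -1], 2,
    fun _ => rfl, ?_, by decide, two_ne_zero, fun F => ?_⟩
  · intro i
    fin_cases i <;> assumption
  · have := hW' F
    rw [walkWeight_concat] at this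
    simp only [Fin.sum_univ_six, Matrix.cons_val, Matrix.cons_val_zero, Matrix.cons_val_one,
      Int.cast_one, Int.cast_neg, Int.cast_ofNat]
    linarith [hW F]

end SimpleGraph

end

/-- in a graph of minimum degree at least 3, every edge of a maximal 2-connected
block `B` is revealed by every vertex of `B`. -/
theorem block_edges_revealed {G : SimpleGraph V} [Fintype V] [DecidableRel G.Adj]
    (hdeg : ∀ x, 3 ≤ G.degree x) (B : Set V) (hB : IsBlock G B) (v : V) (hv : v ∈ B) :
    ∀ e ∈ G.edgeSet, (∀ x ∈ e, x ∈ B) → RevealedBySet G {v} e := by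
  classical
  intro e he heB
  induction e using Sym2.ind with | _ x y => ?_
  have hxy : G.Adj x y := he
  obtain ⟨P, hP⟩ : ∃ P : G.Walk v x, P.IsPath :=
    ((hB.1.2.1.preconnected ⟨v, hv⟩ ⟨x, heB x (Sym2.mem_mk_left x y)⟩).map
      (Embedding.induce B).toHom).exists_isPath
  by_cases hy : y ∈ P.support
  · rw [Sym2.eq_swap]
    exact revealedBySet_singleton_of_isPath hdeg (hP.takeUntil hy) hxy.symm
      (Walk.endpoint_notMem_support_takeUntil hP hy hxy.ne)
  · exact revealedBySet_singleton_of_isPath hdeg hP hxy hy
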